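/- arXiv:1112.6234 — 6 statements merged into one kernel-verified Lean document; each statement's English description precedes it below -/
import Mathlib

section
/- Suppose w ∈ R^n satisfies ‖w‖₁ ≥ α√n·‖w‖₂ for some α ∈ (0,1], and K ⊆ {1,...,n} has cardinality k with 1 ≤ k < n. If β := ‖w_K‖₁ / ‖w‖₁ (assuming w ≠ 0), then β²/k + (1-β)²/(n-k) ≤ 1/(α²n). -/
/-!
Write `‖w‖₁ = a + b` with `a = ‖w_K‖₁` and `b = ‖w_K̄‖₁`. Cauchy–Schwarz on `K` and on `K̄` gives
`a²/k + b²/(n-k) ≤ ‖w‖₂²`, while the hypothesis says `‖w‖₂² ≤ ‖w‖₁²/(α²n)`; dividing by `‖w‖₁²`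
turns the left-hand side into `β²/k + (1-β)²/(n-k)`.
-/

open Finset
noncomputable section
open scoped Classical

def l1 {n : ℕ} (w : Fin n → ℝ) : ℝ := ∑ i, |w i|
def l2 {n : ℕ} (w : Fin n → ℝ) : ℝ := Real.sqrt (∑ i, (w i)^2)
def restr {n : ℕ} (w : Fin n → ℝ) (K : Finset (Fin n)) : Fin n → ℝ := fun i => if i ∈ K then w i else 0
def l0 {n : ℕ} (w : Fin n → ℝ) : ℕ := (Finset.univ.filter (fun i => w i ≠ 0)).card

section Norms

variable {n : ℕ} (w : Fin n → ℝ) (K : Finset (Fin n))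

lemma l1_restr : l1 (restr w K) = ∑ i ∈ K, |w i| := by
  simp only [l1, restr, apply_ite, abs_zero, sum_ite_mem, univ_inter]

lemma l1_eq_l1_restr_add_l1_restr_compl : l1 w = l1 (restr w K) + l1 (restr w Kᶜ) := by
  rw [l1_restr, l1_restr, sum_add_sum_compl]
  rfl

lemma l2_sq : l2 w ^ 2 = ∑ i, w i ^ 2 :=
  Real.sq_sqrt (sum_nonneg fun _ _ => sq_nonneg _)

lemma l1_pos {w : Fin n → ℝ} (hw : w ≠ 0) : 0 < l1 w := by
  obtain ⟨i, hi⟩ := Function.ne_iff.mp hw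
  exact sum_pos' (fun _ _ => abs_nonneg _) ⟨i, mem_univ _, abs_pos.mpr hi⟩

lemma sq_l1_restr_div_card_le : l1 (restr w K) ^ 2 / #K ≤ ∑ i ∈ K, w i ^ 2 := by
  rw [l1_restr]
  simpa [sq_abs] using pow_sum_div_card_le_sum_pow (s := K) (fun _ _ => abs_nonneg (w _)) 1

lemma sq_l1_restr_div_card_add_le_sq_l2 :
    l1 (restr w K) ^ 2 / #K + l1 (restr w Kᶜ) ^ 2 / #Kᶜ ≤ l2 w ^ 2 := by
  rw [l2_sq, ← sum_add_sum_compl K]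
  exact add_le_add (sq_l1_restr_div_card_le w K) (sq_l1_restr_div_card_le w Kᶜ)

end Norms

theorem stmt1_general {n : ℕ} (w : Fin n → ℝ) (K : Finset (Fin n)) (k : ℕ) (α β : ℝ)
    (hα0 : 0 < α)
    (hAE : l1 w ≥ α * Real.sqrt n * l2 w)
    (hK : K.card = k)
    (hw : w ≠ 0)
    (hβ : β = l1 (restr w K) / l1 w) :
    β ^ 2 / k + (1 - β) ^ 2 / (n - k : ℝ) ≤ 1 / (α ^ 2 * n) := by
  have hL := l1_pos hw
  have hn : 0 < n := Nat.pos_of_ne_zero (by rintro rfl; exact hw (Subsingleton.elim _ _))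
  have hcompl : (n - k : ℝ) = #Kᶜ := by
    rw [← hK, card_compl, Fintype.card_fin, Nat.cast_sub (by simpa using card_le_univ K)]
  have h1β : 1 - β = l1 (restr w Kᶜ) / l1 w := by
    rw [hβ, eq_div_iff hL.ne', sub_mul, div_mul_cancel₀ _ hL.ne',
      l1_eq_l1_restr_add_l1_restr_compl w K]
    ring
  have hl2 : α ^ 2 * n * l2 w ^ 2 ≤ l1 w ^ 2 :=
    calc α ^ 2 * n * l2 w ^ 2 = (α * Real.sqrt n * l2 w) ^ 2 := by
          rw [mul_pow, mul_pow, Real.sq_sqrt n.cast_nonneg]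
      _ ≤ l1 w ^ 2 := pow_le_pow_left₀ (by unfold l2; positivity) hAE 2
  calc β ^ 2 / k + (1 - β) ^ 2 / (n - k : ℝ)
      = (l1 (restr w K) ^ 2 / #K + l1 (restr w Kᶜ) ^ 2 / #Kᶜ) / l1 w ^ 2 := by
        rw [h1β, hβ, hcompl, ← hK]
        ring
    _ ≤ l2 w ^ 2 / l1 w ^ 2 := by gcongr; exact sq_l1_restr_div_card_add_le_sq_l2 w K
    _ ≤ 1 / (α ^ 2 * n) := by
        rw [div_le_div_iff₀ (by positivity) (by positivity)]
        linarith

theorem stmt1 {n : ℕ} (w : Fin n → ℝ) (K : Finset (Fin n)) (k : ℕ) (α β : ℝ)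
    (hα0 : 0 < α) (hα1 : α ≤ 1)
    (hAE : l1 w ≥ α * Real.sqrt n * l2 w)
    (hK : K.card = k) (hk1 : 1 ≤ k) (hkn : k < n)
    (hw : w ≠ 0)
    (hβ : β = l1 (restr w K) / l1 w) :
    β ^ 2 / k + (1 - β) ^ 2 / (n - k : ℝ) ≤ 1 / (α ^ 2 * n) :=
  stmt1_general w K k α β hα0 hAE hK hw hβ
end
end

section
/- Let h : R^m → R^n and x ∈ R^m, k ≥ 1. Suppose there exists x* ≠ x with ‖h(x) − h(x*)‖₀ ≤ 2k. Then there exists an error vector e with ‖e‖₀ ≤ k such that, with y = h(x) + e, one has ‖y − h(x*)‖₀ ≤ ‖y − h(x)‖₀; i.e., x fails to be the unique minimizer of x' ↦ ‖y − h(x')‖₀. -/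
open Finset
noncomputable section
open scoped Classical

/-! If `h x` and `h xs` differ on a set `I` of at most `2k` coordinates, copy `h xs` into `h x` on
`min k |I|` of them. The corrupted vector then disagrees with `h x` on exactly those coordinates and
with `h xs` only on the rest of `I`, which is no larger. -/

namespace L0

variable {n : ℕ}

def supp (w : Fin n → ℝ) : Finset (Fin n) := univ.filter (fun i => w i ≠ 0)

theorem l0_eq_card_supp (w : Fin n → ℝ) : l0 w = (supp w).card := rfl

theorem supp_neg (w : Fin n → ℝ) : supp (-w) = supp w := by
  simp [supp]

theorem l0_neg (w : Fin n → ℝ) : l0 (-w) = l0 w := by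
  rw [l0_eq_card_supp, l0_eq_card_supp, supp_neg]

theorem l0_sub_comm (v w : Fin n → ℝ) : l0 (v - w) = l0 (w - v) := by
  rw [← neg_sub, l0_neg]

theorem supp_restr (w : Fin n → ℝ) (K : Finset (Fin n)) : supp (restr w K) = K ∩ supp w := by
  ext i
  by_cases hi : i ∈ K <;> simp [supp, restr, hi]

theorem supp_sub_restr (w : Fin n → ℝ) (K : Finset (Fin n)) :
    supp (w - restr w K) = supp w \ K := by
  ext i
  simp only [supp, mem_filter, mem_univ, true_and, mem_sdiff]
  by_cases hi : i ∈ K <;> simp [restr, hi]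

theorem l0_restr_of_subset {w : Fin n → ℝ} {K : Finset (Fin n)} (hK : K ⊆ supp w) :
    l0 (restr w K) = K.card := by
  rw [l0_eq_card_supp, supp_restr, inter_eq_left.mpr hK]

theorem l0_sub_restr_of_subset {w : Fin n → ℝ} {K : Finset (Fin n)} (hK : K ⊆ supp w) :
    l0 (w - restr w K) = l0 w - K.card := by
  rw [l0_eq_card_supp, supp_sub_restr, card_sdiff_of_subset hK, l0_eq_card_supp]

theorem exists_l0_le_and_l0_sub_le (d : Fin n → ℝ) {k : ℕ} (hd : l0 d ≤ 2 * k) :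
    ∃ e : Fin n → ℝ, l0 e ≤ k ∧ l0 (e - d) ≤ l0 e := by
  obtain ⟨S, hSd, hScard⟩ := exists_subset_card_eq (min_le_right k (supp d).card)
  refine ⟨restr d S, ?_, ?_⟩
  · rw [l0_restr_of_subset hSd, hScard]
    exact min_le_left _ _
  · rw [l0_sub_comm, l0_sub_restr_of_subset hSd, l0_restr_of_subset hSd, hScard, l0_eq_card_supp]
    rw [l0_eq_card_supp] at hd
    omega

end L0

open L0 in
theorem stmt5_general {m n : ℕ} (h : (Fin m → ℝ) → (Fin n → ℝ))
    (x xs : Fin m → ℝ) (k : ℕ)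
    (hsep : l0 (h x - h xs) ≤ 2 * k) :
    ∃ e : Fin n → ℝ, l0 e ≤ k ∧ l0 ((h x + e) - h xs) ≤ l0 ((h x + e) - h x) := by
  rw [l0_sub_comm] at hsep
  obtain ⟨e, hek, hed⟩ := exists_l0_le_and_l0_sub_le (h xs - h x) hsep
  refine ⟨e, hek, ?_⟩
  rwa [add_sub_cancel_left, show h x + e - h xs = e - (h xs - h x) by abel]

theorem stmt5 {m n : ℕ} (h : (Fin m → ℝ) → (Fin n → ℝ))
    (x xs : Fin m → ℝ) (k : ℕ) (hk : 1 ≤ k)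
    (hxs : xs ≠ x) (hsep : l0 (h x - h xs) ≤ 2 * k) :
    ∃ e : Fin n → ℝ, l0 e ≤ k ∧ l0 ((h x + e) - h xs) ≤ l0 ((h x + e) - h x) :=
  stmt5_general h x xs k hsep
end
end

section
/- Let h : R^m → R^n, let e ∈ R^n be supported on K ⊆ {1,...,n}, and set y = h(x) + e. If for every x* ≠ x one has ‖(h(x) − h(x*))_K‖₁ < ‖(h(x) − h(x*))_{K̄}‖₁, then x is the unique minimizer of x' ↦ ‖y − h(x')‖₁: for every x* ≠ x, ‖y − h(x*)‖₁ > ‖y − h(x)‖₁ = ‖e‖₁. -/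
open Finset
noncomputable section
open scoped Classical

/-
Write y − h(x*) = e + d with d = h(x) − h(x*). On K the reverse triangle inequality gives
|e_i + d_i| ≥ |e_i| − |d_i|, and off K, where e vanishes, |e_i + d_i| = |d_i|. Summing,
‖y − h(x*)‖₁ ≥ ‖e‖₁ − ‖d_K‖₁ + ‖d_{K̄}‖₁, which exceeds ‖e‖₁ = ‖y − h(x)‖₁ by the hypothesis on d.
-/

theorem l1_sub_l1_restr_add_l1_restr_compl_le {n : ℕ} {e : Fin n → ℝ} {K : Finset (Fin n)}
    (heK : ∀ i, i ∉ K → e i = 0) (d : Fin n → ℝ) :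
    l1 e - l1 (restr d K) + l1 (restr d Kᶜ) ≤ l1 (e + d) := by
  unfold l1
  rw [← sum_sub_distrib, ← sum_add_distrib]
  gcongr with i
  by_cases hi : i ∈ K
  · simpa [restr, hi] using abs_sub_abs_le_abs_add (e i) (d i)
  · simp [restr, hi, heK i hi]

theorem l1_lt_l1_add_of_l1_restr_lt {n : ℕ} {e d : Fin n → ℝ} {K : Finset (Fin n)}
    (heK : ∀ i, i ∉ K → e i = 0) (hd : l1 (restr d K) < l1 (restr d Kᶜ)) :
    l1 e < l1 (e + d) := by
  linarith [l1_sub_l1_restr_add_l1_restr_compl_le heK d]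

theorem stmt6 {m n : ℕ} (h : (Fin m → ℝ) → (Fin n → ℝ))
    (x : Fin m → ℝ) (e y : Fin n → ℝ) (K : Finset (Fin n))
    (heK : ∀ i, i ∉ K → e i = 0) (hy : y = h x + e)
    (hbal : ∀ xs : Fin m → ℝ, xs ≠ x →
      l1 (restr (h x - h xs) K) < l1 (restr (h x - h xs) Kᶜ)) :
    (l1 (y - h x) = l1 e) ∧
      ∀ xs : Fin m → ℝ, xs ≠ x → l1 (y - h xs) > l1 (y - h x) := by
  have hye : y - h x = e := by rw [hy, add_sub_cancel_left]
  refine ⟨by rw [hye], fun xs hxs => ?_⟩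
  have hys : y - h xs = e + (h x - h xs) := by rw [hy]; abel
  rw [hye, hys]
  exact l1_lt_l1_add_of_l1_restr_lt heK (hbal xs hxs)
end
end

section
/- Let h : R^m → R^n, x ∈ R^m, and K ⊆ {1,...,n}. Suppose there exists x* ≠ x with ‖(h(x) − h(x*))_K‖₁ ≥ ‖(h(x) − h(x*))_{K̄}‖₁. Then there exists e supported on K (namely e = (h(x*) − h(x))_K) such that with y = h(x) + e, ‖y − h(x*)‖₁ ≤ ‖y − h(x)‖₁; i.e., x is not a strict minimizer of x' ↦ ‖y − h(x')‖₁. -/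
open Finset
noncomputable section
open scoped Classical

lemma l1_neg {n : ℕ} (w : Fin n → ℝ) : l1 (-w) = l1 w := by
  simp only [l1, Pi.neg_apply, abs_neg]

lemma restr_apply_of_notMem {n : ℕ} (w : Fin n → ℝ) {K : Finset (Fin n)} {i : Fin n}
    (hi : i ∉ K) : restr w K i = 0 :=
  if_neg hi

lemma restr_neg {n : ℕ} (w : Fin n → ℝ) (K : Finset (Fin n)) :
    restr (-w) K = -restr w K := by
  ext i
  by_cases hi : i ∈ K <;> simp [restr, hi]

lemma l1_restr_sub_comm {n : ℕ} (u v : Fin n → ℝ) (K : Finset (Fin n)) :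
    l1 (restr (u - v) K) = l1 (restr (v - u) K) := by
  rw [← neg_sub, restr_neg, l1_neg]

lemma add_restr_sub_sub {n : ℕ} (u v : Fin n → ℝ) (K : Finset (Fin n)) :
    u + restr (v - u) K - v = restr (u - v) Kᶜ := by
  ext i
  by_cases hi : i ∈ K <;> simp [restr, hi]

theorem stmt7_general {m n : ℕ} (h : (Fin m → ℝ) → (Fin n → ℝ))
    (x xs : Fin m → ℝ) (K : Finset (Fin n))
    (hbal : l1 (restr (h x - h xs) K) ≥ l1 (restr (h x - h xs) Kᶜ)) :
    ∃ e : Fin n → ℝ, (∀ i, i ∉ K → e i = 0) ∧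
      l1 ((h x + e) - h xs) ≤ l1 ((h x + e) - h x) := by
  refine ⟨restr (h xs - h x) K, fun i hi => restr_apply_of_notMem _ hi, ?_⟩
  rw [add_restr_sub_sub, add_sub_cancel_left, l1_restr_sub_comm (h xs)]
  exact hbal

theorem stmt7 {m n : ℕ} (h : (Fin m → ℝ) → (Fin n → ℝ))
    (x xs : Fin m → ℝ) (K : Finset (Fin n))
    (hxs : xs ≠ x)
    (hbal : l1 (restr (h x - h xs) K) ≥ l1 (restr (h x - h xs) Kᶜ)) :
    ∃ e : Fin n → ℝ, (∀ i, i ∉ K → e i = 0) ∧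
      l1 ((h x + e) - h xs) ≤ l1 ((h x + e) - h x) :=
  stmt7_general h x xs K hbal
end
end

section
/- Let H be an n×m matrix, K ⊆ {1,...,n} with |K| ≤ k, and C > 1 be such that every w in the range of H satisfies C‖w_K‖₁ ≤ ‖w_{K̄}‖₁. Let e be supported on K, w ∈ R^n, v, z ∈ R^n, and u ∈ R^m. If ‖Hu + w + e + v − z‖₁ ≤ ‖w + e‖₁, then ‖Hu‖₁ ≤ (2(C+1)/(C−1))·(‖w‖₁ + ‖v‖₁ + ‖z‖₁). -/
/-! Write `h = Hu` and `a = h + w + e + v - z`. Coordinatewise, the triangle inequality gives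
`|aᵢ| ≥ |wᵢ + eᵢ| - |hᵢ| - |vᵢ| - |zᵢ|` on `K`, and `|aᵢ| ≥ |hᵢ| - |wᵢ| - |vᵢ| - |zᵢ|` off `K`,
where `e` vanishes. Summing against `‖a‖₁ ≤ ‖w + e‖₁` bounds the gap `‖h_K̄‖₁ - ‖h_K‖₁` by
`2 (‖w‖₁ + ‖v‖₁ + ‖z‖₁)`, and the cone condition `C ‖h_K‖₁ ≤ ‖h_K̄‖₁` converts the gap into a bound
on `‖h‖₁ = ‖h_K‖₁ + ‖h_K̄‖₁` at the cost of the factor `(C + 1) / (C - 1)`. -/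

open Finset
noncomputable section
open scoped Classical

lemma abs_sub_abs_le_abs_add_three {x y a b c : ℝ} (hxy : x - y = a + b + c) :
    |x| - |y| ≤ |a| + |b| + |c| :=
  calc |x| - |y| ≤ |x - y| := abs_sub_abs_le_abs_sub x y
    _ ≤ |a| + |b| + |c| := hxy ▸ abs_add_three a b c

lemma l1_nonneg {n : ℕ} (a : Fin n → ℝ) : 0 ≤ l1 a :=
  Finset.sum_nonneg fun i _ => abs_nonneg (a i)

lemma l1_restr_add_l1_restr_compl {n : ℕ} (a : Fin n → ℝ) (K : Finset (Fin n)) :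
    l1 (restr a K) + l1 (restr a Kᶜ) = l1 a := by
  unfold l1 restr
  rw [← Finset.sum_add_distrib]
  refine Finset.sum_congr rfl fun i _ => ?_
  by_cases hi : i ∈ K <;> simp [hi]

section

variable {n : ℕ} (K : Finset (Fin n)) {h e : Fin n → ℝ} (w v z : Fin n → ℝ)

lemma abs_restr_compl_sub_abs_restr_le (heK : ∀ i, i ∉ K → e i = 0) (i : Fin n) :
    |restr h Kᶜ i| - |restr h K i|
      ≤ |(h + w + e + v - z) i| - |(w + e) i| + 2 * |w i| + |v i| + |z i| := by
  simp only [restr, Pi.add_apply, Pi.sub_apply, Finset.mem_compl]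
  by_cases hi : i ∈ K
  · have := abs_sub_abs_le_abs_add_three (x := w i + e i) (y := h i + w i + e i + v i - z i)
      (a := -h i) (b := -v i) (c := z i) (by ring)
    simp only [hi, not_true_eq_false, if_false, if_true, abs_zero, abs_neg] at this ⊢
    linarith [abs_nonneg (w i)]
  · have := abs_sub_abs_le_abs_add_three (x := h i) (y := h i + w i + e i + v i - z i)
      (a := -w i) (b := -v i) (c := z i) (by rw [heK i hi]; ring)
    simp only [hi, not_false_eq_true, if_false, if_true, abs_zero, abs_neg, heK i hi,
      add_zero] at this ⊢
    linarith

lemma l1_restr_compl_sub_l1_restr_le (heK : ∀ i, i ∉ K → e i = 0) :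
    l1 (restr h Kᶜ) - l1 (restr h K)
      ≤ l1 (h + w + e + v - z) - l1 (w + e) + 2 * l1 w + l1 v + l1 z := by
  unfold l1
  simp only [← Finset.sum_sub_distrib, Finset.mul_sum, ← Finset.sum_add_distrib]
  exact Finset.sum_le_sum fun i _ => abs_restr_compl_sub_abs_restr_le K w v z heK i

end

lemma add_le_of_mul_le_of_sub_le {C p q D : ℝ} (hC : 1 < C) (hcone : C * p ≤ q)
    (hgap : q - p ≤ D) : p + q ≤ (C + 1) / (C - 1) * D := by
  rw [div_mul_eq_mul_div, le_div_iff₀ (by linarith)]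
  -- `(p + q) (C - 1) = (C + 1) (q - p) - 2 (q - C p)`
  nlinarith [mul_le_mul_of_nonneg_left hgap (by linarith : (0 : ℝ) ≤ C + 1)]

theorem stmt9_general {n m : ℕ} (H : Matrix (Fin n) (Fin m) ℝ)
    (K : Finset (Fin n)) (C : ℝ)
    (hC : 1 < C)
    (hbal : ∀ u : Fin m → ℝ,
      C * l1 (restr (H.mulVec u) K) ≤ l1 (restr (H.mulVec u) Kᶜ))
    (e w v z : Fin n → ℝ) (u : Fin m → ℝ)
    (heK : ∀ i, i ∉ K → e i = 0)
    (hineq : l1 (H.mulVec u + w + e + v - z) ≤ l1 (w + e)) :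
    l1 (H.mulVec u) ≤ 2 * (C + 1) / (C - 1) * (l1 w + l1 v + l1 z) := by
  have hgap : l1 (restr (H.mulVec u) Kᶜ) - l1 (restr (H.mulVec u) K)
      ≤ 2 * (l1 w + l1 v + l1 z) := by
    linarith [l1_restr_compl_sub_l1_restr_le K w v z heK (h := H.mulVec u), l1_nonneg v,
      l1_nonneg z]
  calc l1 (H.mulVec u)
      = l1 (restr (H.mulVec u) K) + l1 (restr (H.mulVec u) Kᶜ) :=
        (l1_restr_add_l1_restr_compl _ K).symm
    _ ≤ (C + 1) / (C - 1) * (2 * (l1 w + l1 v + l1 z)) :=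
        add_le_of_mul_le_of_sub_le hC (hbal u) hgap
    _ = 2 * (C + 1) / (C - 1) * (l1 w + l1 v + l1 z) := by ring

theorem stmt9 {n m : ℕ} (H : Matrix (Fin n) (Fin m) ℝ)
    (K : Finset (Fin n)) (k : ℕ) (C : ℝ)
    (hKk : K.card ≤ k) (hC : 1 < C)
    (hbal : ∀ u : Fin m → ℝ,
      C * l1 (restr (H.mulVec u) K) ≤ l1 (restr (H.mulVec u) Kᶜ))
    (e w v z : Fin n → ℝ) (u : Fin m → ℝ)
    (heK : ∀ i, i ∉ K → e i = 0)
    (hineq : l1 (H.mulVec u + w + e + v - z) ≤ l1 (w + e)) :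
    l1 (H.mulVec u) ≤ 2 * (C + 1) / (C - 1) * (l1 w + l1 v + l1 z) :=
  stmt9_general H K C hC hbal e w v z u heK hineq
end
end

section
/- Fix u₂ ≥ 0 and α ∈ (0,1], and let S = {w ∈ R^n : ‖w‖₂ = 1, wᵢ ≥ 0 for all i, Σᵢ wᵢ ≤ α√n}. Then for every h ∈ R^n with hᵢ ≥ 0, sup_{w ∈ S} ⟨h, w⟩ ≤ sqrt(Σ_{i : hᵢ > u₂} (hᵢ − u₂)²) + α√n·u₂. -/
open Finset
noncomputable section
open scoped Classical

/-! Split `h = (h - c) + c ≤ (h - c)⁺ + c` coordinatewise; against a nonnegative `w` the first part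
is bounded by Cauchy–Schwarz and the second by `c · ∑ wᵢ`. Only the coordinates with `hᵢ > c`
contribute to `‖(h - c)⁺‖₂`. -/

section

variable {ι : Type*} (s : Finset ι) (h w : ι → ℝ) (c : ℝ)

theorem sum_mul_le_sum_posPart_sub_mul_add (hw : ∀ i ∈ s, 0 ≤ w i) :
    ∑ i ∈ s, h i * w i ≤ ∑ i ∈ s, (h i - c)⁺ * w i + c * ∑ i ∈ s, w i := by
  rw [mul_sum, ← sum_add_distrib]
  refine sum_le_sum fun i hi => ?_
  calc h i * w i = (h i - c) * w i + c * w i := by ring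
    _ ≤ (h i - c)⁺ * w i + c * w i := by
      gcongr
      · exact hw i hi
      · exact le_posPart _

theorem sum_sq_posPart_sub_eq_sum_filter :
    ∑ i ∈ s, ((h i - c)⁺) ^ 2 = ∑ i ∈ s.filter (fun i => c < h i), (h i - c) ^ 2 := by
  rw [sum_filter]
  refine sum_congr rfl fun i _ => ?_
  split_ifs with hc
  · rw [posPart_eq_self.mpr (sub_nonneg.mpr hc.le)]
  · rw [posPart_eq_zero.mpr (sub_nonpos.mpr (not_lt.mp hc)), zero_pow two_ne_zero]

theorem sum_mul_le_sqrt_sum_filter_add (hw : ∀ i ∈ s, 0 ≤ w i) :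
    ∑ i ∈ s, h i * w i ≤
      Real.sqrt (∑ i ∈ s.filter (fun i => c < h i), (h i - c) ^ 2) *
          Real.sqrt (∑ i ∈ s, w i ^ 2) + c * ∑ i ∈ s, w i := by
  rw [← sum_sq_posPart_sub_eq_sum_filter]
  calc ∑ i ∈ s, h i * w i ≤ ∑ i ∈ s, (h i - c)⁺ * w i + c * ∑ i ∈ s, w i :=
        sum_mul_le_sum_posPart_sub_mul_add s h w c hw
    _ ≤ _ := by gcongr; exact Real.sum_mul_le_sqrt_mul_sqrt s _ w

end

theorem stmt16_general {n : ℕ} (u2 α : ℝ) (hu2 : 0 ≤ u2)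
    (h : Fin n → ℝ) :
    ∀ w : Fin n → ℝ, l2 w = 1 → (∀ i, 0 ≤ w i) → (∑ i, w i) ≤ α * Real.sqrt n →
      (∑ i, h i * w i) ≤
        Real.sqrt (∑ i ∈ Finset.univ.filter (fun i => u2 < h i), (h i - u2) ^ 2)
          + α * Real.sqrt n * u2 := by
  intro w hw_l2 hwpos hwsum
  have hw_norm : Real.sqrt (∑ i, w i ^ 2) = 1 := hw_l2
  calc ∑ i, h i * w i
      ≤ Real.sqrt (∑ i ∈ univ.filter (fun i => u2 < h i), (h i - u2) ^ 2) * 1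
          + u2 * ∑ i, w i := by
        simpa only [hw_norm] using sum_mul_le_sqrt_sum_filter_add univ h w u2 fun i _ => hwpos i
    _ ≤ _ := by rw [mul_one, mul_comm _ u2]; gcongr

theorem stmt16 {n : ℕ} (u2 α : ℝ) (hu2 : 0 ≤ u2) (hα0 : 0 < α) (hα1 : α ≤ 1)
    (h : Fin n → ℝ) (hh : ∀ i, 0 ≤ h i) :
    ∀ w : Fin n → ℝ, l2 w = 1 → (∀ i, 0 ≤ w i) → (∑ i, w i) ≤ α * Real.sqrt n →
      (∑ i, h i * w i) ≤
        Real.sqrt (∑ i ∈ Finset.univ.filter (fun i => u2 < h i), (h i - u2) ^ 2)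
          + α * Real.sqrt n * u2 :=
  stmt16_general u2 α hu2 h
end
end
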